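/- Positive invariance for the TB submodel: let (S, T_L, T_I, T_T) : [0,∞) → ℝ⁴ be a continuously differentiable solution of the TB submodel with N(t) = S+T_L+T_I+T_T and N(t) > 0. If all four components are nonnegative at t = 0 and N(0) ≤ Λ/d, then all four components remain nonnegative and N(t) ≤ Λ/d for every t ≥ 0; that is, the region D1 = {(S, T_L, T_I, T_T) ∈ ℝ₊⁴ : S+T_L+T_I+T_T ≤ Λ/d} is positively invariant. -/

import Mathlib

/-!
Nonnegativity: `V = ∑ (xᵢ⁻)²`, the sum of the squared negative parts of the four components, is
differentiable with `V' = -2 ∑ xᵢ⁻ xᵢ'`. At any time where a component is negative, its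
derivative is at least `-K ∑ⱼ xⱼ⁻`: every gain term is either nonnegative or proportional to the
negative part of another component, and the incidence term `βₑ S T_I / N` is controlled by a
compactness bound on `βₑ (|S| + |T_I|) / N`. Hence `V' ≤ K' V`, and Grönwall with `V(0) = 0`
forces `V ≡ 0`.

Upper bound: once `T_I, T_T ≥ 0`, `N' = Λ - d N - d_T (T_I + T_T) ≤ -d (N - Λ/d)`, so by
Grönwall `N(t) - Λ/d ≤ (N(0) - Λ/d) e^{-dt} ≤ 0`.
-/

open Set Filter Asymptotics

theorem hasDerivAt_negPart_sq (x : ℝ) : HasDerivAt (fun y : ℝ => y⁻ ^ 2) (-(2 * x⁻)) x := by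
  rw [hasDerivAt_iff_isLittleO]
  refine (IsBigO.of_bound 1 (Eventually.of_forall fun y => ?_)).trans_isLittleO
    (isLittleO_pow_sub_sub x one_lt_two)
  simp only [negPart_def, smul_eq_mul, Real.norm_eq_abs, norm_pow, abs_abs, one_mul]
  rw [abs_le]
  rcases le_total x 0 with hx | hx <;> rcases le_total y 0 with hy | hy <;>
    simp only [sup_of_le_left, sup_of_le_right, neg_nonneg, neg_nonpos, hx, hy, sq_abs] <;>
    constructor <;> nlinarith

theorem nonpos_of_hasDerivWithinAt_le_mul_self {f f' : ℝ → ℝ} {K a b : ℝ}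
    (hf : ContinuousOn f (Icc a b)) (hf' : ∀ x ∈ Ico a b, HasDerivWithinAt f (f' x) (Ici x) x)
    (ha : f a ≤ 0) (bound : ∀ x ∈ Ico a b, f' x ≤ K * f x) :
    ∀ x ∈ Icc a b, f x ≤ 0 := by
  simpa only [gronwallBound_ε0_δ0] using le_gronwallBound_of_liminf_deriv_right_le hf
    (fun x hx _ hr => (hf' x hx).liminf_right_slope_le hr) ha
    fun x hx => (bound x hx).trans_eq (add_zero _).symm

theorem nonneg_of_deriv_ge_neg_mul_sum_negPart {ι : Type*} [Fintype ι] {x x' : ι → ℝ → ℝ}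
    {K a b : ℝ} (hK : 0 ≤ K) (hx : ∀ i, ContinuousOn (x i) (Icc a b))
    (hx' : ∀ i, ∀ t ∈ Ico a b, HasDerivWithinAt (x i) (x' i t) (Ici t) t)
    (ha : ∀ i, 0 ≤ x i a)
    (hquasi : ∀ i, ∀ t ∈ Ico a b, x i t < 0 → -(K * ∑ j, (x j t)⁻) ≤ x' i t) :
    ∀ t ∈ Icc a b, ∀ i, 0 ≤ x i t := by
  have hV := nonpos_of_hasDerivWithinAt_le_mul_self (f := fun t => ∑ i, (x i t)⁻ ^ 2)
    (f' := fun t => ∑ i, -(2 * (x i t)⁻) * x' i t) (K := 2 * K * Fintype.card ι)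
    (continuousOn_finsetSum _ fun i _ => ((hx i).neg.sup continuousOn_const).pow 2)
    (fun t ht => HasDerivWithinAt.fun_sum fun i _ =>
      (hasDerivAt_negPart_sq (x i t)).comp_hasDerivWithinAt t (hx' i t ht))
    (by simp [negPart_eq_zero.2 (ha _)]) ?_
  · intro t ht i
    have hi : (x i t)⁻ ^ 2 ≤ 0 := (Finset.single_le_sum (fun j _ => sq_nonneg (x j t)⁻)
      (Finset.mem_univ i)).trans (hV t ht)
    exact negPart_eq_zero.1 (pow_eq_zero_iff two_ne_zero |>.1 (le_antisymm hi (sq_nonneg _)))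
  · intro t ht
    have hterm : ∀ i, -(2 * (x i t)⁻) * x' i t ≤ 2 * K * ((x i t)⁻ * ∑ j, (x j t)⁻) := by
      intro i
      rcases lt_or_ge (x i t) 0 with hneg | hnonneg
      · nlinarith [hquasi i t ht hneg, negPart_nonneg (x i t)]
      · simp [negPart_eq_zero.2 hnonneg]
    calc ∑ i, -(2 * (x i t)⁻) * x' i t
        ≤ ∑ i, 2 * K * ((x i t)⁻ * ∑ j, (x j t)⁻) := Finset.sum_le_sum fun i _ => hterm i
      _ = 2 * K * (∑ i, (x i t)⁻) ^ 2 := by rw [← Finset.mul_sum, ← Finset.sum_mul, sq]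
      _ ≤ 2 * K * (Fintype.card ι * ∑ i, (x i t)⁻ ^ 2) :=
          mul_le_mul_of_nonneg_left (sq_sum_le_card_mul_sum_sq ..) (by positivity)
      _ = _ := by ring

theorem neg_mul_le_abs_add_abs_mul_negPart_add_negPart (x y : ℝ) :
    -(x * y) ≤ (|x| + |y|) * (x⁻ + y⁻) := by
  rcases le_total x 0 with hx | hx <;> rcases le_total y 0 with hy | hy <;>
    simp only [negPart_eq_neg.2, negPart_eq_zero.2, abs_of_nonneg, abs_of_nonpos, hx, hy] <;>
    nlinarith

theorem mul_mul_div_le_mul_negPart {a x y N C : ℝ} (ha : 0 ≤ a) (hN : 0 < N)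
    (hC : a * (|x| + |y|) / N ≤ C) (hx : x ≤ 0) : a * x * y / N ≤ C * x⁻ := by
  have hρ : a * -y / N ≤ C :=
    le_trans (by gcongr; exact (neg_le_abs y).trans (le_add_of_nonneg_left (abs_nonneg x))) hC
  calc a * x * y / N = x⁻ * (a * -y / N) := by rw [negPart_eq_neg.2 hx]; ring
    _ ≤ x⁻ * C := mul_le_mul_of_nonneg_left hρ (negPart_nonneg x)
    _ = C * x⁻ := mul_comm _ _

theorem neg_mul_negPart_add_negPart_le_mul_mul_div {a x y N C : ℝ} (ha : 0 ≤ a) (hN : 0 < N)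
    (hC : a * (|x| + |y|) / N ≤ C) : -(C * (x⁻ + y⁻)) ≤ a * x * y / N := by
  have hxy := neg_mul_le_abs_add_abs_mul_negPart_add_negPart x y
  have hσ : 0 ≤ x⁻ + y⁻ := add_nonneg (negPart_nonneg x) (negPart_nonneg y)
  calc -(C * (x⁻ + y⁻)) ≤ -(a * (|x| + |y|) / N * (x⁻ + y⁻)) := by gcongr
    _ = a * -((|x| + |y|) * (x⁻ + y⁻)) / N := by ring
    _ ≤ a * (x * y) / N := by gcongr; linarith
    _ = a * x * y / N := by ring

structure IsTBSolution (Lam d dT k1 r r1 be : ℝ) (S TL TI TT N : ℝ → ℝ) : Prop where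
  total_eq : ∀ t, N t = S t + TL t + TI t + TT t
  total_pos : ∀ t ≥ (0 : ℝ), 0 < N t
  hasDerivAt_S : ∀ t ≥ (0 : ℝ),
    HasDerivAt S (Lam - be * S t * TI t / N t - d * S t + r1 * TT t) t
  hasDerivAt_TL : ∀ t ≥ (0 : ℝ), HasDerivAt TL (be * S t * TI t / N t - (d + k1) * TL t) t
  hasDerivAt_TI : ∀ t ≥ (0 : ℝ), HasDerivAt TI (k1 * TL t - (d + dT + r) * TI t) t
  hasDerivAt_TT : ∀ t ≥ (0 : ℝ), HasDerivAt TT (r * TI t - (r1 + d + dT) * TT t) t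

namespace IsTBSolution

variable {Lam d dT k1 r r1 be : ℝ} {S TL TI TT N : ℝ → ℝ}

theorem hasDerivAt_total (h : IsTBSolution Lam d dT k1 r r1 be S TL TI TT N) {t : ℝ}
    (ht : 0 ≤ t) : HasDerivAt N (Lam - d * N t - dT * (TI t + TT t)) t := by
  have hsum := (((h.hasDerivAt_S t ht).add (h.hasDerivAt_TL t ht)).add
    (h.hasDerivAt_TI t ht)).add (h.hasDerivAt_TT t ht)
  refine (hsum.congr_deriv ?_).congr_of_eventuallyEq (.of_forall h.total_eq)
  rw [h.total_eq]
  ring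

theorem exists_incidence_bound (h : IsTBSolution Lam d dT k1 r r1 be S TL TI TT N) {T : ℝ}
    (hT : 0 ≤ T) : ∃ C, 0 ≤ C ∧ ∀ t ∈ Icc 0 T, be * (|S t| + |TI t|) / N t ≤ C := by
  have hcont : ∀ {f f' : ℝ → ℝ}, (∀ t ≥ 0, HasDerivAt f (f' t) t) → ContinuousOn f (Icc 0 T) :=
    fun hf t ht => (hf t ht.1).continuousAt.continuousWithinAt
  obtain ⟨C, hC⟩ := isCompact_Icc.exists_bound_of_continuousOn
    (f := fun t => be * (|S t| + |TI t|) / N t)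
    ((continuousOn_const.mul ((hcont h.hasDerivAt_S).abs.add (hcont h.hasDerivAt_TI).abs)).div
      (hcont fun _ => h.hasDerivAt_total) fun t ht => (h.total_pos t ht.1).ne')
  exact ⟨C, (norm_nonneg _).trans (hC 0 ⟨le_rfl, hT⟩),
    fun t ht => (le_abs_self _).trans (hC t ht)⟩

theorem nonneg (h : IsTBSolution Lam d dT k1 r r1 be S TL TI TT N) (hLam : 0 ≤ Lam)
    (hd : 0 ≤ d) (hdT : 0 ≤ dT) (hk1 : 0 ≤ k1) (hr : 0 ≤ r) (hr1 : 0 ≤ r1) (hbe : 0 ≤ be)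
    (h0 : 0 ≤ S 0 ∧ 0 ≤ TL 0 ∧ 0 ≤ TI 0 ∧ 0 ≤ TT 0) {T : ℝ} (hT : 0 ≤ T) :
    0 ≤ S T ∧ 0 ≤ TL T ∧ 0 ≤ TI T ∧ 0 ≤ TT T := by
  set x : Fin 4 → ℝ → ℝ := ![S, TL, TI, TT]
  set x' : Fin 4 → ℝ → ℝ := ![fun t => Lam - be * S t * TI t / N t - d * S t + r1 * TT t,
    fun t => be * S t * TI t / N t - (d + k1) * TL t, fun t => k1 * TL t - (d + dT + r) * TI t,
    fun t => r * TI t - (r1 + d + dT) * TT t]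
  have hx : ∀ i, ∀ t ≥ 0, HasDerivAt (x i) (x' i t) t := by
    intro i
    fin_cases i
    exacts [h.hasDerivAt_S, h.hasDerivAt_TL, h.hasDerivAt_TI, h.hasDerivAt_TT]
  have hcont : ∀ i, ContinuousOn (x i) (Icc 0 T) := fun i t ht =>
    (hx i t ht.1).continuousAt.continuousWithinAt
  obtain ⟨C, hC0, hbound⟩ := h.exists_incidence_bound hT
  have key := nonneg_of_deriv_ge_neg_mul_sum_negPart (K := C + r1 + k1 + r) (by positivity) hcont
    (fun i t ht => (hx i t ht.1).hasDerivWithinAt) ?_ ?_ T ⟨hT, le_rfl⟩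
  · exact ⟨key 0, key 1, key 2, key 3⟩
  · intro i
    fin_cases i
    exacts [h0.1, h0.2.1, h0.2.2.1, h0.2.2.2]
  intro i t ht hneg
  have hN := h.total_pos t ht.1
  have hCt := hbound t ⟨ht.1, ht.2.le⟩
  have hS := negPart_nonneg (S t)
  have hTL := negPart_nonneg (TL t)
  have hTI := negPart_nonneg (TI t)
  have hTT := negPart_nonneg (TT t)
  fin_cases i <;>
    simp only [x, x', Fin.sum_univ_four, Fin.zero_eta, Fin.mk_one, Fin.reduceFinMk, Fin.isValue,
      Matrix.cons_val', Matrix.cons_val_fin_one, Matrix.cons_val_zero, Matrix.cons_val_one,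
      Matrix.cons_val] at hneg ⊢
  · have hinc := mul_mul_div_le_mul_negPart hbe hN hCt hneg.le
    have hdS := mul_nonneg hd (neg_nonneg.2 hneg.le)
    nlinarith [neg_le_negPart (TT t)]
  · nlinarith [neg_mul_negPart_add_negPart_le_mul_mul_div hbe hN hCt]
  · nlinarith [neg_le_negPart (TL t)]
  · nlinarith [neg_le_negPart (TI t)]

theorem total_le (h : IsTBSolution Lam d dT k1 r r1 be S TL TI TT N) (hd : 0 < d)
    (hdT : 0 ≤ dT) (hnonneg : ∀ t ≥ 0, 0 ≤ TI t ∧ 0 ≤ TT t) (hN0 : N 0 ≤ Lam / d) {T : ℝ}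
    (hT : 0 ≤ T) : N T ≤ Lam / d := by
  have hderiv : ∀ t ≥ 0, HasDerivAt (fun t => N t - Lam / d)
      (Lam - d * N t - dT * (TI t + TT t)) t := fun t ht =>
    (h.hasDerivAt_total ht).sub_const _
  have hle := nonpos_of_hasDerivWithinAt_le_mul_self (K := -d)
    (fun t ht => (hderiv t ht.1).continuousAt.continuousWithinAt)
    (fun t ht => (hderiv t ht.1).hasDerivWithinAt) (sub_nonpos.2 hN0) (fun t ht => ?_)
    T ⟨hT, le_rfl⟩
  · exact sub_nonpos.1 hle
  obtain ⟨hTI, hTT⟩ := hnonneg t ht.1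
  have hLam : d * (Lam / d) = Lam := mul_div_cancel₀ _ hd.ne'
  nlinarith

end IsTBSolution

/-- Positive invariance of the region `D1` for the TB submodel: nonnegativity of all
components is preserved and the total population stays below `Λ/d`. -/
theorem TB_positive_invariance (Lam d dT k1 r r1 be : ℝ)
    (hLam : 0 < Lam) (hd : 0 < d) (hdT : 0 < dT) (hk1 : 0 < k1)
    (hr : 0 < r) (hr1 : 0 < r1) (hbe : 0 < be)
    (S TL TI TT N : ℝ → ℝ)
    (hN : ∀ t, N t = S t + TL t + TI t + TT t)
    (hNpos : ∀ t ≥ (0 : ℝ), 0 < N t)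
    (hS : ∀ t ≥ (0 : ℝ), HasDerivAt S (Lam - be * S t * TI t / N t - d * S t + r1 * TT t) t)
    (hTL : ∀ t ≥ (0 : ℝ), HasDerivAt TL (be * S t * TI t / N t - (d + k1) * TL t) t)
    (hTI : ∀ t ≥ (0 : ℝ), HasDerivAt TI (k1 * TL t - (d + dT + r) * TI t) t)
    (hTT : ∀ t ≥ (0 : ℝ), HasDerivAt TT (r * TI t - (r1 + d + dT) * TT t) t)
    (h0 : 0 ≤ S 0 ∧ 0 ≤ TL 0 ∧ 0 ≤ TI 0 ∧ 0 ≤ TT 0)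
    (hN0le : N 0 ≤ Lam / d) :
    ∀ t ≥ (0 : ℝ), (0 ≤ S t ∧ 0 ≤ TL t ∧ 0 ≤ TI t ∧ 0 ≤ TT t) ∧ N t ≤ Lam / d := by
  have h : IsTBSolution Lam d dT k1 r r1 be S TL TI TT N := ⟨hN, hNpos, hS, hTL, hTI, hTT⟩
  have hnonneg : ∀ t ≥ (0 : ℝ), 0 ≤ S t ∧ 0 ≤ TL t ∧ 0 ≤ TI t ∧ 0 ≤ TT t := fun t ht =>
    h.nonneg hLam.le hd.le hdT.le hk1.le hr.le hr1.le hbe.le h0 ht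
  exact fun t ht =>
    ⟨hnonneg t ht, h.total_le hd hdT.le (fun s hs => (hnonneg s hs).2.2) hN0le ht⟩
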